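/- arXiv:math/0611021 — 2 statements merged into one kernel-verified Lean document; each statement's English description precedes it below -/
import Mathlib

section
/- Let a, b ∈ L¹(0,T) with b ≥ 0, and let u : [0,T] → ℝ be a lower semicontinuous nonnegative function. Suppose there exists a null Lebesgue set S ⊂ (0,T] (not containing 0) such that for all s ∉ S and all t ∈ [s,T], u(t) ≤ u(s) + ∫_s^t a(r)u(r) dr + ∫_s^t b(r) dr. Then u(T) ≤ u(0)·exp(∫_0^T a(s) ds) + ∫_0^T b(s)·exp(∫_s^T a(r) dr) ds. -/
open MeasureTheory Set Filter Topology

/-!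
Let `w x = exp (-∫₀ˣ a)` be the integrating factor and `v x = w x u x - ∫₀ˣ w b`; the claim is
`v T ≤ v 0`. Take `s ≤ t` with `s ∉ S`, put `δ = ∫ₛᵗ |a|`, `B = ∫ₛᵗ b`, and let `M ≥ u`, `K ≥ w`.
The hypothesis from `s` bounds `u` above on `[s, t]`, and from almost every `τ ∈ [s, t]` it bounds
`u τ` below in terms of `u t`, so `|u τ - u s|` is small up to the downward jump `u s - u t`.
Replacing `u` by `u s` in `∫ₛᵗ a u` then gives `v t - v s ≤ K δ (2 δ M + 3 B + u s - u t)`.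
The bracket is an increment of `2 M ∫₀ᵗ |a| + 3 ∫₀ᵗ b - u t`, so it telescopes along a chain
of points outside `S` from `s` to `T` with `δ ≤ ε` on each step, and `v T - v s ≤ C ε` for all
`ε > 0`. The same chaining, with `δ ≤ 1/2` on each step, provides the bound `M`.
-/

theorem Real.exp_mul_sub_add_one_le (x y : ℝ) : Real.exp x * (y - x + 1) ≤ Real.exp y := by
  calc Real.exp x * (y - x + 1) ≤ Real.exp x * Real.exp (y - x) :=
        mul_le_mul_of_nonneg_left (Real.add_one_le_exp _) (Real.exp_pos x).le
    _ = Real.exp y := by rw [← Real.exp_add, add_sub_cancel]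

theorem LowerSemicontinuousOn.aestronglyMeasurable {α : Type*} [TopologicalSpace α]
    [MeasurableSpace α] [OpensMeasurableSpace α] {μ : Measure α} {f : α → ℝ} {s : Set α}
    (hf : LowerSemicontinuousOn f s) (hs : MeasurableSet s) :
    AEStronglyMeasurable f (μ.restrict s) := by
  rw [← map_comap_subtype_coe hs,
    (MeasurableEmbedding.subtype_coe hs).aestronglyMeasurable_map_iff]
  exact (lowerSemicontinuous_restrict_iff.2 hf).measurable.aestronglyMeasurable

theorem IntervalIntegrable.of_mem_Icc {f : ℝ → ℝ} {μ : Measure ℝ} {x y s t : ℝ}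
    (hf : IntervalIntegrable f μ x y) (hs : s ∈ Icc x y) (ht : t ∈ Icc x y) :
    IntervalIntegrable f μ s t :=
  hf.mono_set (uIcc_subset_uIcc (Icc_subset_uIcc hs) (Icc_subset_uIcc ht))

theorem IntervalIntegrable.exists_pos_forall_integral_le {f : ℝ → ℝ} {x y ε : ℝ}
    (hf : IntervalIntegrable f volume x y) (hxy : x ≤ y) (hε : 0 < ε) :
    ∃ η > 0, ∀ s ∈ Icc x y, ∀ t ∈ Icc s y, t - s < η → ∫ r in s..t, f r ≤ ε := by
  have hF : ContinuousOn (fun t => ∫ r in x..t, f r) (Icc x y) := by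
    simpa [uIcc_of_le hxy] using
      intervalIntegral.continuousOn_primitive_interval' hf left_mem_uIcc
  obtain ⟨η, hη, hF⟩ :=
    Metric.uniformContinuousOn_iff.1 (isCompact_Icc.uniformContinuousOn_of_continuous hF) ε hε
  refine ⟨η, hη, fun s hs t ht hst => ?_⟩
  have ht' : t ∈ Icc x y := ⟨hs.1.trans ht.1, ht.2⟩
  have hdist := hF t ht' s hs (by rwa [Real.dist_eq, abs_of_nonneg (by linarith [ht.1])])
  rw [Real.dist_eq, intervalIntegral.integral_interval_sub_left
    (hf.of_mem_Icc (left_mem_Icc.2 hxy) ht') (hf.of_mem_Icc (left_mem_Icc.2 hxy) hs)] at hdist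
  exact (le_abs_self _).trans hdist.le

theorem forall_mem_Icc_diff_of_step {S : Set ℝ} (hS : volume S = 0) {x y η : ℝ} (hη : 0 < η)
    {P : ℝ → Prop} (hy : P y)
    (step : ∀ s ∈ Icc x y \ S, ∀ t ∈ Icc s y, t - s < η → P t → P s) :
    ∀ s ∈ Icc x y \ S, P s := by
  have hdense : Dense Sᶜ := Measure.dense_of_ae (μ := volume) (compl_mem_ae_iff.2 hS)
  suffices h : ∀ n : ℕ, ∀ s ∈ Icc x y \ S, y - s ≤ n * (η / 2) → P s by
    intro s hs
    obtain ⟨n, hn⟩ := exists_nat_ge ((y - s) / (η / 2))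
    exact h n s hs ((div_le_iff₀ (by positivity)).1 hn)
  intro n
  induction n with
  | zero =>
    intro s hs hsy
    rw [Nat.cast_zero, zero_mul] at hsy
    obtain rfl : s = y := by linarith [hs.1.2]
    exact hy
  | succ n ih =>
    intro s hs hsy
    by_cases hnear : y - s < η
    · exact step s hs y ⟨hs.1.2, le_rfl⟩ hnear hy
    obtain ⟨r, hrS, hr⟩ := hdense.exists_between (show s + η / 2 < s + η by linarith)
    push_cast at hsy
    exact step s hs r ⟨by linarith [hr.1], by linarith [hr.2]⟩ (by linarith [hr.2])
      (ih r ⟨⟨by linarith [hs.1.1, hr.1], by linarith [hr.2]⟩, hrS⟩ (by linarith [hr.1]))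

theorem IntervalIntegrable.mul_of_abs_le {f g : ℝ → ℝ} {x y C : ℝ} (hxy : x ≤ y)
    (hf : IntervalIntegrable f volume x y)
    (hg : AEStronglyMeasurable g (volume.restrict (Ioc x y)))
    (hC : ∀ t ∈ Ioc x y, |g t| ≤ C) :
    IntervalIntegrable (fun t => f t * g t) volume x y := by
  rw [intervalIntegrable_iff_integrableOn_Ioc_of_le hxy] at hf ⊢
  exact hf.mul_bdd hg ((ae_restrict_iff' measurableSet_Ioc).2 (ae_of_all _ hC))

def IsGronwallSubsolution (T : ℝ) (a b u : ℝ → ℝ) (S : Set ℝ) : Prop :=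
  ∀ s ∈ Icc (0:ℝ) T \ S, ∀ t ∈ Icc s T,
    u t ≤ u s + (∫ r in s..t, a r * u r) + ∫ r in s..t, b r

noncomputable def integratingFactor (a : ℝ → ℝ) (x : ℝ) : ℝ :=
  Real.exp (-∫ r in (0:ℝ)..x, a r)

noncomputable def gronwallPotential (a b u : ℝ → ℝ) (x : ℝ) : ℝ :=
  integratingFactor a x * u x - ∫ r in (0:ℝ)..x, integratingFactor a r * b r

variable {T M K : ℝ} {a b u : ℝ → ℝ} {S : Set ℝ}

theorem integratingFactor_pos (a : ℝ → ℝ) (x : ℝ) : 0 < integratingFactor a x :=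
  Real.exp_pos _

theorem continuousOn_integratingFactor (ha : IntervalIntegrable a volume 0 T) :
    ContinuousOn (integratingFactor a) (uIcc 0 T) :=
  (intervalIntegral.continuousOn_primitive_interval' ha left_mem_uIcc).neg.rexp

theorem integratingFactor_mul_one_add_le (ha : IntervalIntegrable a volume 0 T) {r t : ℝ}
    (hr : r ∈ Icc 0 T) (ht : t ∈ Icc 0 T) :
    integratingFactor a t * (1 + ∫ q in r..t, a q) ≤ integratingFactor a r := by
  have h0 : (0:ℝ) ∈ Icc 0 T := left_mem_Icc.2 (hr.1.trans hr.2)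
  unfold integratingFactor
  convert Real.exp_mul_sub_add_one_le (-∫ q in (0:ℝ)..t, a q) (-∫ q in (0:ℝ)..r, a q) using 2
  rw [← intervalIntegral.integral_interval_sub_left (ha.of_mem_Icc h0 ht) (ha.of_mem_Icc h0 hr)]
  ring

theorem integratingFactor_sub_le (ha : IntervalIntegrable a volume 0 T)
    (hK : ∀ x ∈ Icc 0 T, integratingFactor a x ≤ K) {r t : ℝ} (hr : r ∈ Icc 0 T)
    (ht : t ∈ Icc r T) :
    integratingFactor a t - integratingFactor a r ≤ K * ∫ q in r..t, |a q| := by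
  have ht' : t ∈ Icc 0 T := ⟨hr.1.trans ht.1, ht.2⟩
  have hfactor := integratingFactor_mul_one_add_le ha hr ht'
  have hw := integratingFactor_pos a t
  calc integratingFactor a t - integratingFactor a r
      ≤ integratingFactor a t * -∫ q in r..t, a q := by
        linarith [mul_add_one (integratingFactor a t) (∫ q in r..t, a q)]
    _ ≤ integratingFactor a t * ∫ q in r..t, |a q| :=
        mul_le_mul_of_nonneg_left
          ((neg_le_abs _).trans (intervalIntegral.abs_integral_le_integral_abs ht.1)) hw.le
    _ ≤ K * ∫ q in r..t, |a q| :=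
        mul_le_mul_of_nonneg_right (hK t ht')
          (intervalIntegral.integral_nonneg ht.1 fun _ _ => abs_nonneg _)

theorem integratingFactor_mul_integral_sub_le (ha : IntervalIntegrable a volume 0 T)
    (hb : IntervalIntegrable b volume 0 T) (hb_nonneg : ∀ t ∈ Icc 0 T, 0 ≤ b t)
    (hK : ∀ x ∈ Icc 0 T, integratingFactor a x ≤ K) {s t : ℝ} (hs : s ∈ Icc 0 T)
    (ht : t ∈ Icc s T) :
    integratingFactor a t * (∫ r in s..t, b r) - ∫ r in s..t, integratingFactor a r * b r
      ≤ K * (∫ r in s..t, |a r|) * ∫ r in s..t, b r := by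
  have ht' : t ∈ Icc 0 T := ⟨hs.1.trans ht.1, ht.2⟩
  have hsub : Icc s t ⊆ Icc 0 T := Icc_subset_Icc hs.1 ht.2
  have hK0 : 0 ≤ K := (integratingFactor_pos a s).le.trans (hK s hs)
  have hb' := hb.of_mem_Icc hs ht'
  have hwb := (hb.continuousOn_mul (continuousOn_integratingFactor ha)).of_mem_Icc hs ht'
  rw [← intervalIntegral.integral_const_mul,
    ← intervalIntegral.integral_sub (hb'.const_mul _) hwb, ← intervalIntegral.integral_const_mul]
  refine intervalIntegral.integral_mono_on ht.1 ((hb'.const_mul _).sub hwb) (hb'.const_mul _)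
    fun r hr => ?_
  rw [← sub_mul]
  refine mul_le_mul_of_nonneg_right ?_ (hb_nonneg r (hsub hr))
  calc integratingFactor a t - integratingFactor a r ≤ K * ∫ q in r..t, |a q| :=
        integratingFactor_sub_le ha hK (hsub hr) ⟨hr.2, ht.2⟩
    _ ≤ K * ∫ q in s..t, |a q| :=
        mul_le_mul_of_nonneg_left (intervalIntegral.integral_mono_interval hr.1 hr.2 le_rfl
          (ae_of_all _ fun _ => abs_nonneg _) (ha.of_mem_Icc hs ht').abs) hK0

namespace IsGronwallSubsolution

theorem le_two_mul_of_integral_abs_le (h : IsGronwallSubsolution T a b u S)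
    (hb_nonneg : ∀ t ∈ Icc 0 T, 0 ≤ b t) (hu_nonneg : ∀ t ∈ Icc 0 T, 0 ≤ u t)
    {s e : ℝ} (hs : s ∈ Icc 0 T \ S) (he : e ∈ Icc s T)
    (ha : IntervalIntegrable a volume s e) (hb : IntervalIntegrable b volume s e)
    (ha_small : ∫ r in s..e, |a r| ≤ 1 / 2) :
    ∀ t ∈ Icc s e, u t ≤ 2 * (u s + ∫ r in s..e, b r) := by
  intro t ht
  have hsub : Icc s e ⊆ Icc 0 T := Icc_subset_Icc hs.1.1 he.2
  have hb_le : ∀ τ ∈ Icc s e, ∫ r in s..τ, b r ≤ ∫ r in s..e, b r := fun τ hτ =>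
    intervalIntegral.integral_mono_interval le_rfl hτ.1 hτ.2
      ((ae_restrict_iff' measurableSet_Ioc).2 (ae_of_all _ fun r hr =>
        hb_nonneg r (hsub (Ioc_subset_Icc_self hr)))) hb
  have hB : 0 ≤ ∫ r in s..e, b r :=
    intervalIntegral.integral_nonneg he.1 fun r hr => hb_nonneg r (hsub hr)
  have hus : 0 ≤ u s := hu_nonneg s hs.1
  have hut := h s hs t ⟨ht.1, ht.2.trans he.2⟩
  by_cases hau : IntervalIntegrable (fun r => a r * u r) volume s t
  swap
  · rw [intervalIntegral.integral_undef hau] at hut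
    linarith [hb_le t ht]
  -- `V` bounds `u` on `[s, t]`, so `∫ₛᵗ |a| ≤ 1/2` makes `∫ₛᵗ |a u|` at most half of `V`.
  set V := u s + (∫ r in s..t, |a r * u r|) + ∫ r in s..e, b r
  have hau_le : ∀ τ ∈ Icc s t, ∫ r in s..τ, a r * u r ≤ ∫ r in s..t, |a r * u r| := by
    intro τ hτ
    calc ∫ r in s..τ, a r * u r ≤ ∫ r in s..τ, |a r * u r| :=
          (le_abs_self _).trans (intervalIntegral.abs_integral_le_integral_abs hτ.1)
      _ ≤ ∫ r in s..t, |a r * u r| :=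
          intervalIntegral.integral_mono_interval le_rfl hτ.1 hτ.2
            (ae_of_all _ fun r => abs_nonneg _) hau.abs
  have hV : ∀ τ ∈ Icc s t, u τ ≤ V := fun τ hτ => by
    have := h s hs τ ⟨hτ.1, hτ.2.trans (ht.2.trans he.2)⟩
    linarith [hau_le τ hτ, hb_le τ ⟨hτ.1, hτ.2.trans ht.2⟩]
  have hV0 : 0 ≤ V := hus.trans (hV s ⟨le_rfl, ht.1⟩)
  have ha_small' : ∫ r in s..t, |a r| ≤ 1 / 2 :=
    (intervalIntegral.integral_mono_interval le_rfl ht.1 ht.2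
      (ae_of_all _ fun r => abs_nonneg _) ha.abs).trans ha_small
  have hhalf : ∫ r in s..t, |a r * u r| ≤ V / 2 :=
    calc ∫ r in s..t, |a r * u r| ≤ ∫ r in s..t, |a r| * V := by
          refine intervalIntegral.integral_mono_on ht.1 hau.abs
            ((ha.mono_set (uIcc_subset_uIcc_left (Icc_subset_uIcc ht))).abs.mul_const V)
            fun r hr => ?_
          rw [abs_mul, abs_of_nonneg (hu_nonneg r (hsub ⟨hr.1, hr.2.trans ht.2⟩))]
          exact mul_le_mul_of_nonneg_left (hV r hr) (abs_nonneg _)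
      _ = (∫ r in s..t, |a r|) * V := intervalIntegral.integral_mul_const _ _
      _ ≤ 1 / 2 * V := mul_le_mul_of_nonneg_right ha_small' hV0
      _ = V / 2 := by ring
  linarith [hV t ⟨ht.1, le_rfl⟩]

theorem bddAbove (h : IsGronwallSubsolution T a b u S) (hT : 0 ≤ T) (h0 : 0 ∉ S)
    (hS_null : volume S = 0) (ha : IntervalIntegrable a volume 0 T)
    (hb : IntervalIntegrable b volume 0 T) (hb_nonneg : ∀ t ∈ Icc 0 T, 0 ≤ b t)
    (hu_nonneg : ∀ t ∈ Icc 0 T, 0 ≤ u t) :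
    BddAbove (u '' Icc 0 T) := by
  obtain ⟨η, hη, ha_small⟩ := ha.abs.exists_pos_forall_integral_le hT (one_half_pos (α := ℝ))
  refine forall_mem_Icc_diff_of_step hS_null hη (P := fun s => BddAbove (u '' Icc s T))
    (by simp) (fun s hs t ht hst ht_bdd => ?_) 0 ⟨left_mem_Icc.2 hT, h0⟩
  refine BddAbove.mono ((image_mono Icc_subset_Icc_union_Icc).trans (image_union _ _ _).le)
    (BddAbove.union ⟨2 * (u s + ∫ r in s..t, b r), forall_mem_image.2 ?_⟩ ht_bdd)
  have ht' : t ∈ Icc 0 T := ⟨hs.1.1.trans ht.1, ht.2⟩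
  exact h.le_two_mul_of_integral_abs_le hb_nonneg hu_nonneg hs ht (ha.of_mem_Icc hs.1 ht')
    (hb.of_mem_Icc hs.1 ht') (ha_small s hs.1 t ht hst)

theorem sub_le (h : IsGronwallSubsolution T a b u S) (ha : IntervalIntegrable a volume 0 T)
    (hu_nonneg : ∀ t ∈ Icc 0 T, 0 ≤ u t) (hM : ∀ t ∈ Icc 0 T, u t ≤ M)
    {s t : ℝ} (hs : s ∈ Icc 0 T \ S) (ht : t ∈ Icc s T) :
    u t - u s ≤ (∫ r in s..t, |a r|) * M + ∫ r in s..t, b r := by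
  have hau : ∫ r in s..t, a r * u r ≤ ∫ r in s..t, |a r| * M := by
    refine (Real.le_norm_self _).trans (intervalIntegral.norm_integral_le_of_norm_le ht.1
      (ae_of_all _ fun r hr => ?_)
      ((ha.of_mem_Icc hs.1 ⟨hs.1.1.trans ht.1, ht.2⟩).abs.mul_const M))
    have hr' : r ∈ Icc 0 T := ⟨hs.1.1.trans hr.1.le, hr.2.trans ht.2⟩
    rw [Real.norm_eq_abs, abs_mul, abs_of_nonneg (hu_nonneg r hr')]
    exact mul_le_mul_of_nonneg_left (hM r hr') (abs_nonneg _)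
  rw [intervalIntegral.integral_mul_const] at hau
  linarith [h s hs t ht]

theorem ae_abs_sub_le (h : IsGronwallSubsolution T a b u S) (hS_null : volume S = 0)
    (ha : IntervalIntegrable a volume 0 T) (hb : IntervalIntegrable b volume 0 T)
    (hb_nonneg : ∀ t ∈ Icc 0 T, 0 ≤ b t) (hu_nonneg : ∀ t ∈ Icc 0 T, 0 ≤ u t)
    (hM : ∀ t ∈ Icc 0 T, u t ≤ M) {s t : ℝ} (hs : s ∈ Icc 0 T \ S) (ht : t ∈ Icc s T) :
    ∀ᵐ τ, τ ∈ Ioc s t →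
      |u τ - u s| ≤ 2 * ((∫ r in s..t, |a r|) * M + ∫ r in s..t, b r) + (u s - u t) := by
  have hsub : Icc s t ⊆ Icc 0 T := Icc_subset_Icc hs.1.1 ht.2
  have hM0 : 0 ≤ M := (hu_nonneg s hs.1).trans (hM s hs.1)
  have hmono : ∀ p ∈ Icc s t, ∀ q ∈ Icc p t,
      (∫ r in p..q, |a r|) * M + ∫ r in p..q, b r
        ≤ (∫ r in s..t, |a r|) * M + ∫ r in s..t, b r := by
    intro p hp q hq
    gcongr
    · exact intervalIntegral.integral_mono_interval hp.1 hq.1 hq.2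
        (ae_of_all _ fun r => abs_nonneg _) (ha.of_mem_Icc hs.1 ⟨hs.1.1.trans ht.1, ht.2⟩).abs
    · exact intervalIntegral.integral_mono_interval hp.1 hq.1 hq.2
        ((ae_restrict_iff' measurableSet_Ioc).2 (ae_of_all _ fun r hr =>
          hb_nonneg r (hsub (Ioc_subset_Icc_self hr))))
        (hb.of_mem_Icc hs.1 ⟨hs.1.1.trans ht.1, ht.2⟩)
  have hE0 : 0 ≤ (∫ r in s..t, |a r|) * M + ∫ r in s..t, b r :=
    add_nonneg (mul_nonneg (intervalIntegral.integral_nonneg ht.1 fun r _ => abs_nonneg _) hM0)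
      (intervalIntegral.integral_nonneg ht.1 fun r hr => hb_nonneg r (hsub hr))
  have hst := h.sub_le ha hu_nonneg hM hs ht
  filter_upwards [compl_mem_ae_iff.2 hS_null] with τ hτS hτ
  have hτ' : τ ∈ Icc s t := Ioc_subset_Icc_self hτ
  have hsτ := h.sub_le ha hu_nonneg hM hs ⟨hτ'.1, hτ'.2.trans ht.2⟩
  have hτt := h.sub_le ha hu_nonneg hM ⟨hsub hτ', hτS⟩ ⟨hτ'.2, ht.2⟩
  rw [abs_le]
  constructor <;> linarith [hmono s ⟨le_rfl, ht.1⟩ τ hτ', hmono τ hτ' t ⟨hτ'.2, le_rfl⟩]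

theorem integral_mul_le (h : IsGronwallSubsolution T a b u S) (hS_null : volume S = 0)
    (ha : IntervalIntegrable a volume 0 T) (hb : IntervalIntegrable b volume 0 T)
    (hb_nonneg : ∀ t ∈ Icc 0 T, 0 ≤ b t) (hu_nonneg : ∀ t ∈ Icc 0 T, 0 ≤ u t)
    (hM : ∀ t ∈ Icc 0 T, u t ≤ M) (hau : IntervalIntegrable (fun r => a r * u r) volume 0 T)
    {s t : ℝ} (hs : s ∈ Icc 0 T \ S) (ht : t ∈ Icc s T) :
    ∫ r in s..t, a r * u r ≤ (∫ r in s..t, a r) * u s + (∫ r in s..t, |a r|) *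
      (2 * ((∫ r in s..t, |a r|) * M + ∫ r in s..t, b r) + (u s - u t)) := by
  have ht' : t ∈ Icc 0 T := ⟨hs.1.1.trans ht.1, ht.2⟩
  have ha' := ha.of_mem_Icc hs.1 ht'
  have hsplit : ∫ r in s..t, a r * u r
      = (∫ r in s..t, a r) * u s + ∫ r in s..t, a r * (u r - u s) := by
    simp_rw [mul_sub]
    rw [intervalIntegral.integral_sub (hau.of_mem_Icc hs.1 ht') (ha'.mul_const _),
      intervalIntegral.integral_mul_const]
    ring
  rw [hsplit]
  gcongr
  refine (Real.le_norm_self _).trans ((intervalIntegral.norm_integral_le_of_norm_le ht.1 ?_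
    (ha'.abs.mul_const _)).trans_eq (intervalIntegral.integral_mul_const _ _))
  filter_upwards [h.ae_abs_sub_le hS_null ha hb hb_nonneg hu_nonneg hM hs ht] with τ hτ hτI
  rw [Real.norm_eq_abs, abs_mul]
  exact mul_le_mul_of_nonneg_left (hτ hτI) (abs_nonneg _)

theorem gronwallPotential_sub_le (h : IsGronwallSubsolution T a b u S) (hS_null : volume S = 0)
    (ha : IntervalIntegrable a volume 0 T) (hb : IntervalIntegrable b volume 0 T)
    (hb_nonneg : ∀ t ∈ Icc 0 T, 0 ≤ b t) (hu_nonneg : ∀ t ∈ Icc 0 T, 0 ≤ u t)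
    (hM : ∀ t ∈ Icc 0 T, u t ≤ M) (hau : IntervalIntegrable (fun r => a r * u r) volume 0 T)
    (hK : ∀ x ∈ Icc 0 T, integratingFactor a x ≤ K) {s t : ℝ} (hs : s ∈ Icc 0 T \ S)
    (ht : t ∈ Icc s T) :
    gronwallPotential a b u t - gronwallPotential a b u s
      ≤ K * (∫ r in s..t, |a r|) *
        (2 * (∫ r in s..t, |a r|) * M + 3 * (∫ r in s..t, b r) + (u s - u t)) := by
  have ht' : t ∈ Icc 0 T := ⟨hs.1.1.trans ht.1, ht.2⟩
  have h0 : (0:ℝ) ∈ Icc 0 T := left_mem_Icc.2 (hs.1.1.trans hs.1.2)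
  set δ := ∫ r in s..t, |a r|
  set B := ∫ r in s..t, b r
  set E := 2 * (δ * M + B) + (u s - u t)
  have hδ : 0 ≤ δ := intervalIntegral.integral_nonneg ht.1 fun _ _ => abs_nonneg _
  have hδM : 0 ≤ δ * M := mul_nonneg hδ ((hu_nonneg s hs.1).trans (hM s hs.1))
  have hB : 0 ≤ B := intervalIntegral.integral_nonneg ht.1 fun r hr =>
    hb_nonneg r ⟨hs.1.1.trans hr.1, hr.2.trans ht.2⟩
  have hE : 0 ≤ E := by linarith [h.sub_le ha hu_nonneg hM hs ht]
  have hw := integratingFactor_pos a t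
  have hu_part : integratingFactor a t * u t
      ≤ integratingFactor a s * u s + K * δ * E + integratingFactor a t * B := by
    have hut := mul_le_mul_of_nonneg_left (h s hs t ht) hw.le
    have hfactor := mul_le_mul_of_nonneg_right (integratingFactor_mul_one_add_le ha hs.1 ht')
      (hu_nonneg s hs.1)
    have hwJ := mul_le_mul_of_nonneg_left
      (h.integral_mul_le hS_null ha hb hb_nonneg hu_nonneg hM hau hs ht) hw.le
    have hwE := mul_le_mul_of_nonneg_right (hK t ht') (mul_nonneg hδ hE)
    linear_combination hut + hfactor + hwJ + hwE
  have hwb := hb.continuousOn_mul (continuousOn_integratingFactor ha)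
  have hv : gronwallPotential a b u t - gronwallPotential a b u s
      = integratingFactor a t * u t - integratingFactor a s * u s
        - ∫ r in s..t, integratingFactor a r * b r := by
    unfold gronwallPotential
    rw [← intervalIntegral.integral_interval_sub_left (hwb.of_mem_Icc h0 ht')
      (hwb.of_mem_Icc h0 hs.1)]
    ring
  rw [hv]
  linear_combination hu_part + integratingFactor_mul_integral_sub_le ha hb hb_nonneg hK hs.1 ht

theorem gronwallPotential_le (h : IsGronwallSubsolution T a b u S) (hS_null : volume S = 0)
    (ha : IntervalIntegrable a volume 0 T) (hb : IntervalIntegrable b volume 0 T)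
    (hb_nonneg : ∀ t ∈ Icc 0 T, 0 ≤ b t) (hu_nonneg : ∀ t ∈ Icc 0 T, 0 ≤ u t)
    (hM : ∀ t ∈ Icc 0 T, u t ≤ M) (hau : IntervalIntegrable (fun r => a r * u r) volume 0 T)
    (hK : ∀ x ∈ Icc 0 T, integratingFactor a x ≤ K) {s : ℝ} (hs : s ∈ Icc 0 T \ S) :
    gronwallPotential a b u T ≤ gronwallPotential a b u s := by
  have hT : 0 ≤ T := hs.1.1.trans hs.1.2
  set v := gronwallPotential a b u
  set C : ℝ → ℝ := fun p =>
    K * (2 * (∫ r in p..T, |a r|) * M + 3 * (∫ r in p..T, b r) + (u p - u T))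
  have hε : ∀ ε > 0, v T - v s ≤ ε * C s := by
    intro ε hε
    obtain ⟨η, hη, ha_small⟩ := ha.abs.exists_pos_forall_integral_le hT hε
    refine forall_mem_Icc_diff_of_step hS_null hη (P := fun p => v T - v p ≤ ε * C p)
      (by simp [C]) (fun p hp q hq hpq hPq => ?_) s hs
    have hq' : q ∈ Icc 0 T := ⟨hp.1.1.trans hq.1, hq.2⟩
    have hK0 : 0 ≤ K := (integratingFactor_pos a p).le.trans (hK p hp.1)
    have hM0 : 0 ≤ M := (hu_nonneg p hp.1).trans (hM p hp.1)
    have hQ : 0 ≤ 2 * (∫ r in p..q, |a r|) * M + 3 * (∫ r in p..q, b r) + (u p - u q) := by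
      have := h.sub_le ha hu_nonneg hM hp hq
      have : 0 ≤ (∫ r in p..q, |a r|) * M :=
        mul_nonneg (intervalIntegral.integral_nonneg hq.1 fun _ _ => abs_nonneg _) hM0
      have : 0 ≤ ∫ r in p..q, b r := intervalIntegral.integral_nonneg hq.1 fun r hr =>
        hb_nonneg r ⟨hp.1.1.trans hr.1, hr.2.trans hq.2⟩
      linarith
    have hadd : ∀ f : ℝ → ℝ, IntervalIntegrable f volume 0 T →
        ∫ r in p..T, f r = (∫ r in p..q, f r) + ∫ r in q..T, f r := fun f hf =>
      (intervalIntegral.integral_add_adjacent_intervals (hf.of_mem_Icc hp.1 hq')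
        (hf.of_mem_Icc hq' (right_mem_Icc.2 hT))).symm
    calc v T - v p = (v T - v q) + (v q - v p) := by ring
      _ ≤ ε * C q + K * (∫ r in p..q, |a r|) *
            (2 * (∫ r in p..q, |a r|) * M + 3 * (∫ r in p..q, b r) + (u p - u q)) :=
          add_le_add hPq
            (h.gronwallPotential_sub_le hS_null ha hb hb_nonneg hu_nonneg hM hau hK hp hq)
      _ ≤ ε * C q + K * ε *
            (2 * (∫ r in p..q, |a r|) * M + 3 * (∫ r in p..q, b r) + (u p - u q)) := by
          gcongr
          exact ha_small p hp.1 q hq hpq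
      _ = ε * C p := by
          simp only [C, hadd _ ha.abs, hadd _ hb]
          ring
  have hlim : Tendsto (fun ε => ε * C s) (𝓝[>] 0) (𝓝 0) := by
    simpa using ((continuous_mul_const (C s)).tendsto 0).mono_left nhdsWithin_le_nhds
  linarith [ge_of_tendsto hlim (eventually_nhdsWithin_of_forall hε)]

end IsGronwallSubsolution

theorem gronwallPotential_zero (a b u : ℝ → ℝ) : gronwallPotential a b u 0 = u 0 := by
  simp [gronwallPotential, integratingFactor]

theorem exp_integral_mul_gronwallPotential (ha : IntervalIntegrable a volume 0 T) :
    Real.exp (∫ s in (0:ℝ)..T, a s) * gronwallPotential a b u T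
      = u T - ∫ s in (0:ℝ)..T, b s * Real.exp (∫ r in s..T, a r) := by
  unfold gronwallPotential integratingFactor
  rw [mul_sub, ← mul_assoc, ← Real.exp_add, add_neg_cancel, Real.exp_zero, one_mul,
    ← intervalIntegral.integral_const_mul]
  congr 1
  refine intervalIntegral.integral_congr fun s hs => ?_
  rw [← intervalIntegral.integral_interval_sub_left ha (ha.mono_set (uIcc_subset_uIcc_left hs)),
    sub_eq_add_neg, Real.exp_add]
  ring

theorem gronwall_variant (T : ℝ) (hT : 0 < T) (a b : ℝ → ℝ)
    (ha : IntervalIntegrable a volume 0 T)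
    (hb : IntervalIntegrable b volume 0 T)
    (hb_nonneg : ∀ t ∈ Icc (0:ℝ) T, 0 ≤ b t)
    (u : ℝ → ℝ)
    (hu_lsc : LowerSemicontinuousOn u (Icc 0 T))
    (hu_nonneg : ∀ t ∈ Icc (0:ℝ) T, 0 ≤ u t)
    (S : Set ℝ) (hS : S ⊆ Ioc 0 T) (hS_null : volume S = 0)
    (hineq : ∀ s ∈ Icc (0:ℝ) T \ S, ∀ t ∈ Icc s T,
      u t ≤ u s + (∫ r in s..t, a r * u r) + ∫ r in s..t, b r) :
    u T ≤ u 0 * Real.exp (∫ s in (0:ℝ)..T, a s)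
      + ∫ s in (0:ℝ)..T, b s * Real.exp (∫ r in s..T, a r) := by
  have h0 : (0:ℝ) ∈ Icc 0 T \ S := ⟨left_mem_Icc.2 hT.le, fun h => (hS h).1.false⟩
  have h : IsGronwallSubsolution T a b u S := hineq
  obtain ⟨M, hM⟩ := h.bddAbove hT.le h0.2 hS_null ha hb hb_nonneg hu_nonneg
  have hM' : ∀ t ∈ Icc 0 T, u t ≤ M := fun t ht => hM (mem_image_of_mem u ht)
  have hu_abs : ∀ t ∈ Ioc 0 T, |u t| ≤ M := fun t ht => by
    rw [abs_of_nonneg (hu_nonneg t (Ioc_subset_Icc_self ht))]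
    exact hM' t (Ioc_subset_Icc_self ht)
  have hau : IntervalIntegrable (fun r => a r * u r) volume 0 T := ha.mul_of_abs_le hT.le
    ((hu_lsc.mono Ioc_subset_Icc_self).aestronglyMeasurable measurableSet_Ioc) hu_abs
  obtain ⟨K, hK⟩ := isCompact_Icc.bddAbove_image
    (uIcc_of_le hT.le ▸ continuousOn_integratingFactor ha)
  have hv := h.gronwallPotential_le hS_null ha hb hb_nonneg hu_nonneg hM' hau
    (fun x hx => hK (mem_image_of_mem _ hx)) h0
  rw [gronwallPotential_zero] at hv
  calc u T = Real.exp (∫ s in (0:ℝ)..T, a s) * gronwallPotential a b u T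
        + ∫ s in (0:ℝ)..T, b s * Real.exp (∫ r in s..T, a r) := by
        rw [exp_integral_mul_gronwallPotential ha]; ring
    _ ≤ u 0 * Real.exp (∫ s in (0:ℝ)..T, a s)
        + ∫ s in (0:ℝ)..T, b s * Real.exp (∫ r in s..T, a r) := by
        rw [mul_comm (u 0)]; gcongr
end

section
/- The double series Σ_{n∈ℤ} (Σ_{k∈ℤ, k≠0, k≠n} 1/(|k|·|n−k|))² converges. -/
/-!
With `a = |k|`, `b = |n - k|` we have `a + b ≥ |n|`, so the larger of `a, b` is at least `|n| / 2`.
If `a ≤ b` and `1 ≤ s ≤ 2`, then `a b ≥ a ^ s b ^ (2 - s) ≥ a ^ s (|n| / 2) ^ (2 - s)`; hence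
`1 / (a b) ≤ (|n| / 2) ^ (s - 2) (a ^ (-s) + b ^ (-s))`, and summing over `k` gives
`S(n) = O(|n| ^ (s - 2))`. Any `s ∈ (1, 3/2)` then makes `S(n)²` summable.
-/

open Real

lemma inv_mul_le_rpow_mul_add_rpow {a b c s : ℝ} (ha : 0 ≤ a) (hb : 0 ≤ b) (hc : 0 < c)
    (hcab : 2 * c ≤ a + b) (hs₁ : 1 ≤ s) (hs₂ : s ≤ 2) :
    (a * b)⁻¹ ≤ c ^ (s - 2) * (a ^ (-s) + b ^ (-s)) := by
  wlog hab : a ≤ b generalizing a b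
  · simpa only [mul_comm a, add_comm (a ^ (-s))] using
      this hb ha (by linarith) (le_of_not_ge hab)
  rcases ha.eq_or_lt with rfl | ha₀
  · rw [zero_mul, inv_zero]
    positivity
  have hb₀ : 0 < b := ha₀.trans_le hab
  calc (a * b)⁻¹ = a ^ (-s) * (a ^ (s - 1) * b ^ (-1 : ℝ)) := by
        rw [← mul_assoc, ← rpow_add ha₀, show -s + (s - 1) = -1 by ring, rpow_neg_one,
          rpow_neg_one, mul_inv]
    _ ≤ a ^ (-s) * (b ^ (s - 1) * b ^ (-1 : ℝ)) := by gcongr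
    _ = a ^ (-s) * b ^ (s - 2) := by
        rw [← rpow_add hb₀]
        ring_nf
    _ ≤ a ^ (-s) * c ^ (s - 2) :=
        mul_le_mul_of_nonneg_left (rpow_le_rpow_of_nonpos hc (by linarith) (by linarith))
          (by positivity)
    _ ≤ c ^ (s - 2) * (a ^ (-s) + b ^ (-s)) := by
        rw [mul_comm, mul_add]
        exact le_add_of_nonneg_right (by positivity)

lemma inv_abs_mul_abs_sub_le {n : ℤ} (hn : n ≠ 0) (k : ℤ) {s : ℝ} (hs₁ : 1 ≤ s) (hs₂ : s ≤ 2) :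
    (|(k : ℝ)| * |((n - k : ℤ) : ℝ)|)⁻¹ ≤
      (|(n : ℝ)| / 2) ^ (s - 2) * (|(k : ℝ)| ^ (-s) + |((n - k : ℤ) : ℝ)| ^ (-s)) := by
  refine inv_mul_le_rpow_mul_add_rpow (abs_nonneg _) (abs_nonneg _) (by positivity) ?_ hs₁ hs₂
  calc 2 * (|(n : ℝ)| / 2) = |(k : ℝ) + ((n - k : ℤ) : ℝ)| := by push_cast; ring_nf
    _ ≤ |(k : ℝ)| + |((n - k : ℤ) : ℝ)| := abs_add_le _ _

lemma tsum_inv_abs_mul_abs_sub_le {n : ℤ} (hn : n ≠ 0) {s : ℝ} (hs₁ : 1 < s) (hs₂ : s ≤ 2) :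
    ∑' k : ℤ, (|(k : ℝ)| * |((n - k : ℤ) : ℝ)|)⁻¹ ≤
      2 * (|(n : ℝ)| / 2) ^ (s - 2) * ∑' k : ℤ, |(k : ℝ)| ^ (-s) := by
  have hsum : Summable fun k : ℤ => |(k : ℝ)| ^ (-s) := summable_abs_int_rpow hs₁
  have hsum_sub : Summable fun k : ℤ => |((n - k : ℤ) : ℝ)| ^ (-s) :=
    (Equiv.subLeft n).summable_iff.mpr hsum
  have htsum_sub : ∑' k : ℤ, |((n - k : ℤ) : ℝ)| ^ (-s) = ∑' k : ℤ, |(k : ℝ)| ^ (-s) :=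
    (Equiv.subLeft n).tsum_eq fun k : ℤ => |(k : ℝ)| ^ (-s)
  have hbound := fun k => inv_abs_mul_abs_sub_le hn k hs₁.le hs₂
  have hmajorant := (hsum.add hsum_sub).mul_left ((|(n : ℝ)| / 2) ^ (s - 2))
  calc ∑' k : ℤ, (|(k : ℝ)| * |((n - k : ℤ) : ℝ)|)⁻¹
      ≤ ∑' k : ℤ, (|(n : ℝ)| / 2) ^ (s - 2) * (|(k : ℝ)| ^ (-s) + |((n - k : ℤ) : ℝ)| ^ (-s)) :=
        (hmajorant.of_nonneg_of_le (fun _ => by positivity) hbound).tsum_le_tsum hbound hmajorant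
    _ = 2 * (|(n : ℝ)| / 2) ^ (s - 2) * ∑' k : ℤ, |(k : ℝ)| ^ (-s) := by
        rw [tsum_mul_left, hsum.tsum_add hsum_sub, htsum_sub]
        ring

-- The guard only excludes the terms that `0⁻¹ = 0` already kills.
lemma ite_inv_abs_mul_abs_sub (n k : ℤ) :
    (if k ≠ 0 ∧ k ≠ n then (|(k : ℝ)| * |((n - k : ℤ) : ℝ)|)⁻¹ else 0) =
      (|(k : ℝ)| * |((n - k : ℤ) : ℝ)|)⁻¹ := by
  split_ifs with h
  · rfl
  · rcases not_and_or.mp h with hk | hk <;> simp_all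

theorem double_series_summable :
    Summable (fun n : ℤ =>
      (∑' k : ℤ, if k ≠ 0 ∧ k ≠ n then (|(k : ℝ)| * |((n - k : ℤ) : ℝ)|)⁻¹ else 0) ^ 2) := by
  simp_rw [ite_inv_abs_mul_abs_sub]
  set C := ∑' k : ℤ, |(k : ℝ)| ^ (-(5 / 4 : ℝ))
  refine Summable.of_norm_bounded_eventually
    (g := fun n : ℤ => (2 * C) ^ 2 * 2 ^ (3 / 2 : ℝ) * |(n : ℝ)| ^ (-(3 / 2 : ℝ)))
    ((summable_abs_int_rpow (by norm_num)).mul_left _) ?_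
  filter_upwards [Filter.eventually_cofinite_ne 0] with n hn
  rw [Real.norm_eq_abs, abs_pow, abs_of_nonneg (tsum_nonneg fun _ => by positivity)]
  calc (∑' k : ℤ, (|(k : ℝ)| * |((n - k : ℤ) : ℝ)|)⁻¹) ^ 2
      ≤ (2 * (|(n : ℝ)| / 2) ^ (5 / 4 - 2 : ℝ) * C) ^ 2 :=
        pow_le_pow_left₀ (tsum_nonneg fun _ => by positivity)
          (tsum_inv_abs_mul_abs_sub_le hn (by norm_num) (by norm_num)) 2
    _ = (2 * C) ^ 2 * 2 ^ (3 / 2 : ℝ) * |(n : ℝ)| ^ (-(3 / 2 : ℝ)) := by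
        rw [mul_pow, mul_pow, ← rpow_natCast ((|(n : ℝ)| / 2) ^ _), ← rpow_mul (by positivity),
          div_rpow (abs_nonneg _) zero_le_two]
        norm_num
        rw [rpow_neg zero_le_two]
        field_simp
        ring
end
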